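/- Let d ≥ 2, λ ∈ [0,1], let Φ = |φ⟩⟨φ| with |φ⟩ = (1/√d) Σ_i e_i ⊗ e_i the maximally entangled state on ℂ^d ⊗ ℂ^d, and let ρ = λΦ + (1−λ)/(d²−1) (I − Φ) be the corresponding isotropic state. Then both the one-sided and the two-sided negativity of quantumness of ρ equal Q_N^A(ρ) = Q_N^{AB}(ρ) = |λd² − 1|/(2(d+1)). -/

import Mathlib

/-!
The isotropic state is `c I + μ Φ` with `c = (1-λ)/(d²-1)`, `μ = λ - c`, and conjugating by a
local unitary keeps this shape, with `φ` replaced by `ψ = (U ⊗ V)† φ`.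

One-sided: the blocks of `c I + μ |ψ⟩⟨ψ|` are `c I + μ |ψᵢ⟩⟨ψᵢ|` on the diagonal, which is
positive semidefinite so its trace norm is its trace, and the rank-one `μ |ψᵢ⟩⟨ψⱼ|` off it. The
rows `ψᵢ` of `(U ⊗ I)† φ` all have squared norm `1/d`, so the value does not depend on `U`.

Two-sided: the entrywise l1-norm is at least `|Tr ρ| + |μ| ((∑ₚ |ψₚ|)² - 1)`. Every amplitude of
`(U ⊗ V)† φ` is at most `1/√d` (Cauchy–Schwarz on columns of `U` and `V`), which forces
`∑ₚ |ψₚ| ≥ √d`; `U = V = I` attains the bound.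
-/

open scoped Kronecker ComplexOrder
open Matrix

noncomputable def traceNorm {ι : Type*} [Fintype ι] [DecidableEq ι] (A : Matrix ι ι ℂ) : ℝ :=
  (((Matrix.isHermitian_conjTranspose_mul_self A).eigenvectorUnitary : Matrix ι ι ℂ) *
    Matrix.diagonal (fun i => ((Real.sqrt ((Matrix.isHermitian_conjTranspose_mul_self A).eigenvalues i) : ℝ) : ℂ)) *
    (star ((Matrix.isHermitian_conjTranspose_mul_self A).eigenvectorUnitary : Matrix ι ι ℂ))).trace.re

noncomputable def l1Norm {ι κ : Type*} [Fintype ι] [Fintype κ] (A : Matrix ι κ ℂ) : ℝ :=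
  ∑ i, ∑ j, ‖A i j‖

def ptranspose {α β : Type*} (ρ : Matrix (α × β) (α × β) ℂ) : Matrix (α × β) (α × β) ℂ :=
  Matrix.of fun p q => ρ (p.1, q.2) (q.1, p.2)

noncomputable def negativity {α β : Type*} [Fintype α] [Fintype β] [DecidableEq α] [DecidableEq β]
    (ρ : Matrix (α × β) (α × β) ℂ) : ℝ :=
  (traceNorm (ptranspose ρ) - 1) / 2

def matUnit {ι : Type*} [DecidableEq ι] (i j : ι) : Matrix ι ι ℂ :=
  Matrix.single i j 1

noncomputable def mcs {n : ℕ} (t : Fin n → Fin n → ℂ) :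
    Matrix (Fin n × Fin n) (Fin n × Fin n) ℂ :=
  ∑ i, ∑ j, t i j • (matUnit i j ⊗ₖ matUnit i j)

def blockOf {m n : ℕ} (ρ : Matrix (Fin m × Fin n) (Fin m × Fin n) ℂ) (i j : Fin m) :
    Matrix (Fin n) (Fin n) ℂ :=
  Matrix.of fun k l => ρ (i, k) (j, l)

noncomputable def conjU {m n : ℕ} (U : Matrix.unitaryGroup (Fin m) ℂ)
    (ρ : Matrix (Fin m × Fin n) (Fin m × Fin n) ℂ) : Matrix (Fin m × Fin n) (Fin m × Fin n) ℂ :=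
  ((U : Matrix (Fin m) (Fin m) ℂ) ⊗ₖ (1 : Matrix (Fin n) (Fin n) ℂ))ᴴ * ρ *
    ((U : Matrix (Fin m) (Fin m) ℂ) ⊗ₖ (1 : Matrix (Fin n) (Fin n) ℂ))

noncomputable def conjUV {m n : ℕ} (U : Matrix.unitaryGroup (Fin m) ℂ)
    (V : Matrix.unitaryGroup (Fin n) ℂ)
    (ρ : Matrix (Fin m × Fin n) (Fin m × Fin n) ℂ) : Matrix (Fin m × Fin n) (Fin m × Fin n) ℂ :=
  ((U : Matrix (Fin m) (Fin m) ℂ) ⊗ₖ (V : Matrix (Fin n) (Fin n) ℂ))ᴴ * ρ *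
    ((U : Matrix (Fin m) (Fin m) ℂ) ⊗ₖ (V : Matrix (Fin n) (Fin n) ℂ))

noncomputable def QNA {m n : ℕ} (ρ : Matrix (Fin m × Fin n) (Fin m × Fin n) ℂ) : ℝ :=
  ⨅ U : Matrix.unitaryGroup (Fin m) ℂ,
    ((∑ i, ∑ j, traceNorm (blockOf (conjU U ρ) i j)) - 1) / 2

noncomputable def QNAB {m n : ℕ} (ρ : Matrix (Fin m × Fin n) (Fin m × Fin n) ℂ) : ℝ :=
  ⨅ U : Matrix.unitaryGroup (Fin m) ℂ, ⨅ V : Matrix.unitaryGroup (Fin n) ℂ,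
    (l1Norm (conjUV U V ρ) - 1) / 2

/-- The maximally entangled unit vector `|φ⟩ = (1/√d) Σ_i e_i ⊗ e_i` on `ℂ^d ⊗ ℂ^d`. -/
noncomputable def meVec (d : ℕ) : (Fin d × Fin d) → ℂ :=
  fun p => if p.1 = p.2 then ((1 / Real.sqrt d : ℝ) : ℂ) else 0

/-- The projector `Φ = |φ⟩⟨φ|` onto the maximally entangled state. -/
noncomputable def mePhi (d : ℕ) : Matrix (Fin d × Fin d) (Fin d × Fin d) ℂ :=
  Matrix.vecMulVec (meVec d) (star (meVec d))

/-- The isotropic state `ρ = λΦ + (1−λ)/(d²−1) (I − Φ)`. -/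
noncomputable def isotropic (d : ℕ) (lam : ℝ) : Matrix (Fin d × Fin d) (Fin d × Fin d) ℂ :=
  (lam : ℂ) • mePhi d +
    (((1 - lam) / (d ^ 2 - 1) : ℝ) : ℂ) •
      ((1 : Matrix (Fin d × Fin d) (Fin d × Fin d) ℂ) - mePhi d)

section RankOne

variable {ι : Type*} [Fintype ι] [DecidableEq ι]

omit [DecidableEq ι] in
lemma star_dotProduct_self_eq_sum_norm_sq (v : ι → ℂ) :
    star v ⬝ᵥ v = ((∑ i, ‖v i‖ ^ 2 : ℝ) : ℂ) := by
  simp [dotProduct, Complex.conj_mul']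

open scoped MatrixOrder in
lemma traceNorm_eq_re_trace_sqrt (A : Matrix ι ι ℂ) :
    traceNorm A = (CFC.sqrt (Aᴴ * A)).trace.re := by
  have hA := posSemidef_conjTranspose_mul_self A
  rw [CFC.sqrt_eq_cfc, cfc_nnreal_eq_real _ _ hA.nonneg,
    (isHermitian_conjTranspose_mul_self A).cfc_eq]
  simp [traceNorm, IsHermitian.cfc, Function.comp_def, max_eq_left (hA.eigenvalues_nonneg _)]

open scoped MatrixOrder in
lemma traceNorm_of_posSemidef {M : Matrix ι ι ℂ} (hM : M.PosSemidef) :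
    traceNorm M = M.trace.re := by
  rw [traceNorm_eq_re_trace_sqrt, hM.1.eq, CFC.sqrt_unique rfl hM.nonneg]

open scoped MatrixOrder in
lemma traceNorm_vecMulVec_star (a b : ι → ℂ) {α β : ℝ} (hα : 0 ≤ α) (hβ : 0 < β)
    (ha : star a ⬝ᵥ a = (α ^ 2 : ℝ)) (hb : star b ⬝ᵥ b = (β ^ 2 : ℝ)) :
    traceNorm (vecMulVec a (star b)) = α * β := by
  -- `√(A†A) = (α/β) |b⟩⟨b|`, since `A†A = α² |b⟩⟨b|` and `|b⟩⟨b|² = β² |b⟩⟨b|`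
  set S : Matrix ι ι ℂ := ((α / β : ℝ) : ℂ) • vecMulVec b (star b)
  have hS : S.PosSemidef :=
    (posSemidef_vecMulVec_self_star b).smul (by exact_mod_cast div_nonneg hα hβ.le)
  have hSS : S * S = (vecMulVec a (star b))ᴴ * vecMulVec a (star b) := by
    simp only [S, conjTranspose_vecMulVec, star_star, smul_mul_smul_comm, vecMulVec_mul_vecMulVec,
      ha, hb, vecMulVec_smul, smul_smul]
    congr 1
    push_cast
    field_simp
  rw [traceNorm_eq_re_trace_sqrt, CFC.sqrt_unique hSS hS.nonneg, trace_smul, trace_vecMulVec,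
    dotProduct_comm, hb]
  simp only [smul_eq_mul, ← Complex.ofReal_mul, Complex.ofReal_re]
  field_simp

noncomputable def scalarPlusRankOne (c μ : ℝ) (ψ : ι → ℂ) : Matrix ι ι ℂ :=
  (c : ℂ) • 1 + (μ : ℂ) • vecMulVec ψ (star ψ)

lemma conjTranspose_mul_scalarPlusRankOne_mul {K : Matrix ι ι ℂ} (hK : Kᴴ * K = 1)
    (c μ : ℝ) (ψ : ι → ℂ) :
    Kᴴ * scalarPlusRankOne c μ ψ * K = scalarPlusRankOne c μ (Kᴴ *ᵥ ψ) := by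
  simp only [scalarPlusRankOne, Matrix.mul_add, Matrix.add_mul, Matrix.mul_smul, Matrix.smul_mul,
    Matrix.mul_one, hK, mul_vecMulVec, vecMulVec_mul, star_mulVec, conjTranspose_conjTranspose]

lemma posSemidef_scalarPlusRankOne {c μ s : ℝ} {ψ : ι → ℂ} (hs : 0 < s)
    (hψ : star ψ ⬝ᵥ ψ = s) (hc : 0 ≤ c) (hcμ : 0 ≤ c + μ * s) :
    (scalarPlusRankOne c μ ψ).PosSemidef := by
  -- split along the projection `P = s⁻¹ |ψ⟩⟨ψ|` and its complement
  set P : Matrix ι ι ℂ := ((s⁻¹ : ℝ) : ℂ) • vecMulVec ψ (star ψ)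
  have hPP : P * P = P := by
    simp only [P, smul_mul_smul_comm, vecMulVec_mul_vecMulVec, hψ, vecMulVec_smul, smul_smul]
    congr 1
    push_cast
    field_simp
  have hPH : Pᴴ = P := by simp [P, conjTranspose_smul]
  have hQ : (1 - P)ᴴ * (1 - P) = 1 - P := by
    rw [conjTranspose_sub, conjTranspose_one, hPH, Matrix.sub_mul, Matrix.mul_sub,
      Matrix.mul_sub, hPP]
    simp
  have hdecomp : scalarPlusRankOne c μ ψ
      = (c : ℂ) • (1 - P) + (((c + μ * s) / s : ℝ) : ℂ) • vecMulVec ψ (star ψ) := by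
    simp only [scalarPlusRankOne, P]
    match_scalars
    · simp
    · field_simp
      ring
  rw [hdecomp]
  refine .add (hQ ▸ posSemidef_conjTranspose_mul_self _ |>.smul ?_)
    ((posSemidef_vecMulVec_self_star ψ).smul ?_)
  · exact_mod_cast div_nonneg hcμ hs.le
  · exact_mod_cast hc

lemma traceNorm_scalarPlusRankOne {c μ s : ℝ} {ψ : ι → ℂ} (hs : 0 < s)
    (hψ : star ψ ⬝ᵥ ψ = s) (hc : 0 ≤ c) (hcμ : 0 ≤ c + μ * s) :
    traceNorm (scalarPlusRankOne c μ ψ) = c * Fintype.card ι + μ * s := by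
  rw [traceNorm_of_posSemidef (posSemidef_scalarPlusRankOne hs hψ hc hcμ), scalarPlusRankOne,
    trace_add, trace_smul, trace_smul, trace_one, trace_vecMulVec, dotProduct_comm, hψ]
  simp

omit [Fintype ι] in
lemma norm_scalarPlusRankOne_apply (c μ : ℝ) (ψ : ι → ℂ) (p q : ι) :
    ‖scalarPlusRankOne c μ ψ p q‖
      = |μ| * (‖ψ p‖ * ‖ψ q‖) + if p = q then |c + μ * ‖ψ p‖ ^ 2| - |μ| * ‖ψ p‖ ^ 2 else 0 := by
  by_cases hpq : p = q
  · subst hpq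
    have hpp : scalarPlusRankOne c μ ψ p p = ((c + μ * ‖ψ p‖ ^ 2 : ℝ) : ℂ) := by
      simp [scalarPlusRankOne, vecMulVec_apply, Complex.mul_conj']
    rw [hpp, Complex.norm_real, Real.norm_eq_abs]
    simp [sq]
  · simp [scalarPlusRankOne, vecMulVec_apply, hpq]

lemma l1Norm_scalarPlusRankOne (c μ : ℝ) (ψ : ι → ℂ) :
    l1Norm (scalarPlusRankOne c μ ψ)
      = ∑ p, |c + μ * ‖ψ p‖ ^ 2| + |μ| * ((∑ p, ‖ψ p‖) ^ 2 - ∑ p, ‖ψ p‖ ^ 2) := by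
  simp only [l1Norm, norm_scalarPlusRankOne_apply, Finset.sum_add_distrib, Finset.sum_ite_eq,
    Finset.mem_univ, if_true, ← Finset.mul_sum, ← Finset.sum_mul, Finset.sum_sub_distrib]
  ring

lemma le_l1Norm_scalarPlusRankOne (c μ : ℝ) {ψ : ι → ℂ} (hψ : ∑ p, ‖ψ p‖ ^ 2 = 1) :
    |c * Fintype.card ι + μ| + |μ| * ((∑ p, ‖ψ p‖) ^ 2 - 1)
      ≤ l1Norm (scalarPlusRankOne c μ ψ) := by
  have htrace : ∑ p, (c + μ * ‖ψ p‖ ^ 2) = c * Fintype.card ι + μ := by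
    simp [Finset.sum_add_distrib, ← Finset.mul_sum, hψ, mul_comm]
  rw [l1Norm_scalarPlusRankOne, hψ, ← htrace]
  gcongr
  exact Finset.abs_sum_le_sum_abs _ _

end RankOne

lemma ciInf_eq_of_forall_ge_of_eq {α ι : Type*} [ConditionallyCompleteLattice α] {f : ι → α}
    {a : α} (h : ∀ i, a ≤ f i) {i₀ : ι} (h₀ : f i₀ = a) : ⨅ i, f i = a :=
  have : Nonempty ι := ⟨i₀⟩
  le_antisymm (h₀ ▸ ciInf_le ⟨a, Set.forall_mem_range.2 h⟩ i₀) (le_ciInf h)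

lemma one_div_le_sum_of_le {ι : Type*} (s : Finset ι) {r : ι → ℝ} {t : ℝ} (ht : 0 < t)
    (hr : ∀ p ∈ s, 0 ≤ r p) (hle : ∀ p ∈ s, r p ≤ t) (hsq : ∑ p ∈ s, r p ^ 2 = 1) :
    1 / t ≤ ∑ p ∈ s, r p := by
  rw [div_le_iff₀ ht, ← hsq, Finset.sum_mul]
  exact Finset.sum_le_sum fun p hp => by nlinarith [hr p hp, hle p hp]

lemma sum_norm_sq_unitary_col {ι : Type*} [Fintype ι] [DecidableEq ι]
    (U : Matrix.unitaryGroup ι ℂ) (i : ι) : ∑ k, ‖(U : Matrix ι ι ℂ) k i‖ ^ 2 = 1 := by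
  have h := congrFun (congrFun (Matrix.UnitaryGroup.star_mul_self U) i) i
  rw [star_eq_conjTranspose, mul_apply, one_apply_eq] at h
  exact_mod_cast (star_dotProduct_self_eq_sum_norm_sq fun k => (U : Matrix ι ι ℂ) k i).symm.trans h

lemma sum_norm_sq_conjTranspose_mulVec {ι : Type*} [Fintype ι] [DecidableEq ι] {K : Matrix ι ι ℂ}
    (hK : K * Kᴴ = 1) (v : ι → ℂ) : ∑ p, ‖(Kᴴ *ᵥ v) p‖ ^ 2 = ∑ p, ‖v p‖ ^ 2 := by
  have h : star (Kᴴ *ᵥ v) ⬝ᵥ (Kᴴ *ᵥ v) = star v ⬝ᵥ v := by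
    rw [star_mulVec, conjTranspose_conjTranspose, dotProduct_mulVec, vecMul_vecMul, hK, vecMul_one]
  rwa [star_dotProduct_self_eq_sum_norm_sq, star_dotProduct_self_eq_sum_norm_sq,
    Complex.ofReal_inj] at h

section Blocks

variable {m n : ℕ}

lemma conjUV_scalarPlusRankOne (U : Matrix.unitaryGroup (Fin m) ℂ)
    (V : Matrix.unitaryGroup (Fin n) ℂ) (c μ : ℝ) (ψ : Fin m × Fin n → ℂ) :
    conjUV U V (scalarPlusRankOne c μ ψ) = scalarPlusRankOne c μ
      (((U : Matrix (Fin m) (Fin m) ℂ) ⊗ₖ (V : Matrix (Fin n) (Fin n) ℂ))ᴴ *ᵥ ψ) :=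
  conjTranspose_mul_scalarPlusRankOne_mul (kronecker_mem_unitary U.2 V.2).1 c μ ψ

lemma conjU_scalarPlusRankOne (U : Matrix.unitaryGroup (Fin m) ℂ) (c μ : ℝ)
    (ψ : Fin m × Fin n → ℂ) :
    conjU U (scalarPlusRankOne c μ ψ) = scalarPlusRankOne c μ
      (((U : Matrix (Fin m) (Fin m) ℂ) ⊗ₖ (1 : Matrix (Fin n) (Fin n) ℂ))ᴴ *ᵥ ψ) :=
  conjUV_scalarPlusRankOne U 1 c μ ψ

lemma blockOf_scalarPlusRankOne (c μ : ℝ) (ψ : Fin m × Fin n → ℂ) (i j : Fin m) :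
    blockOf (scalarPlusRankOne c μ ψ) i j
      = if i = j then scalarPlusRankOne c μ (fun k => ψ (i, k))
        else (μ : ℂ) • vecMulVec (fun k => ψ (i, k)) (star fun k => ψ (j, k)) := by
  ext k l
  split_ifs with hij
  · subst hij
    simp [blockOf, scalarPlusRankOne, one_apply, vecMulVec_apply]
  · simp [blockOf, scalarPlusRankOne, one_apply, vecMulVec_apply, hij]

lemma sum_traceNorm_blockOf_scalarPlusRankOne {c μ s : ℝ} {ψ : Fin m × Fin n → ℂ} (hs : 0 < s)
    (hrow : ∀ i, star (fun k => ψ (i, k)) ⬝ᵥ (fun k => ψ (i, k)) = s)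
    (hc : 0 ≤ c) (hcμ : 0 ≤ c + μ * s) :
    ∑ i, ∑ j, traceNorm (blockOf (scalarPlusRankOne c μ ψ) i j)
      = m * (c * n + μ * s) + ((m : ℝ) ^ 2 - m) * (|μ| * s) := by
  have hblock : ∀ i j, traceNorm (blockOf (scalarPlusRankOne c μ ψ) i j)
      = |μ| * s + if i = j then c * n + μ * s - |μ| * s else 0 := by
    intro i j
    rw [blockOf_scalarPlusRankOne]
    split_ifs
    · rw [traceNorm_scalarPlusRankOne hs (hrow i) hc hcμ, Fintype.card_fin]
      ring
    · rw [← smul_vecMulVec, traceNorm_vecMulVec_star _ _ (α := |μ| * √s) (β := √s) (by positivity)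
        (Real.sqrt_pos.2 hs)]
      · rw [mul_assoc, Real.mul_self_sqrt hs.le, add_zero]
      · rw [star_smul, smul_dotProduct, dotProduct_smul, hrow]
        simp only [RCLike.star_def, Complex.conj_ofReal, smul_eq_mul, mul_pow, sq_abs,
          Real.sq_sqrt hs.le, Complex.ofReal_mul, Complex.ofReal_pow]
        ring
      · simp [hrow, Real.sq_sqrt hs.le]
  simp only [hblock, Finset.sum_add_distrib, Finset.sum_ite_eq, Finset.mem_univ, if_true,
    Finset.sum_const, Finset.card_univ, Fintype.card_fin, nsmul_eq_mul]
  ring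

end Blocks

section MaximallyEntangled

variable {d : ℕ}

lemma norm_meVec (p : Fin d × Fin d) : ‖meVec d p‖ = if p.1 = p.2 then 1 / √d else 0 := by
  unfold meVec
  split_ifs <;> simp

lemma sum_norm_meVec : ∑ p, ‖meVec d p‖ = √d := by
  simp [norm_meVec, Fintype.sum_prod_type, ← div_eq_mul_inv, Real.div_sqrt]

lemma sum_norm_sq_meVec (hd : 0 < d) : ∑ p, ‖meVec d p‖ ^ 2 = 1 := by
  simp [norm_meVec, Fintype.sum_prod_type, ite_pow, hd.ne']

lemma conjTranspose_kronecker_mulVec_meVec_apply (U V : Matrix (Fin d) (Fin d) ℂ) (k l : Fin d) :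
    ((U ⊗ₖ V)ᴴ *ᵥ meVec d) (k, l) = ((1 / √d : ℝ) : ℂ) * ∑ i, star (U i k) * star (V i l) := by
  simp [mulVec, dotProduct, Fintype.sum_prod_type, meVec, Finset.mul_sum, mul_comm]

lemma norm_conjTranspose_kronecker_mulVec_meVec_le (U V : Matrix.unitaryGroup (Fin d) ℂ)
    (p : Fin d × Fin d) :
    ‖(((U : Matrix (Fin d) (Fin d) ℂ) ⊗ₖ (V : Matrix (Fin d) (Fin d) ℂ))ᴴ *ᵥ meVec d) p‖
      ≤ 1 / √d := by
  obtain ⟨k, l⟩ := p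
  rw [conjTranspose_kronecker_mulVec_meVec_apply, norm_mul, Complex.norm_real,
    Real.norm_of_nonneg (by positivity)]
  refine mul_le_of_le_one_right (by positivity) ?_
  calc ‖∑ i, star ((U : Matrix (Fin d) (Fin d) ℂ) i k) * star ((V : Matrix (Fin d) (Fin d) ℂ) i l)‖
      ≤ ∑ i, ‖(U : Matrix (Fin d) (Fin d) ℂ) i k‖ * ‖(V : Matrix (Fin d) (Fin d) ℂ) i l‖ :=
        (norm_sum_le _ _).trans_eq (by simp)
    _ ≤ √(∑ i, ‖(U : Matrix (Fin d) (Fin d) ℂ) i k‖ ^ 2)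
          * √(∑ i, ‖(V : Matrix (Fin d) (Fin d) ℂ) i l‖ ^ 2) :=
        Real.sum_mul_le_sqrt_mul_sqrt _ _ _
    _ = 1 := by simp [sum_norm_sq_unitary_col]

lemma QNA_scalarPlusRankOne_meVec (hd : 0 < d) {c μ : ℝ} (hc : 0 ≤ c) (hcμ : 0 ≤ c + μ / d) :
    QNA (scalarPlusRankOne c μ (meVec d)) = (c * d ^ 2 + μ + (d - 1) * |μ| - 1) / 2 := by
  have hd' : (0 : ℝ) < d := by exact_mod_cast hd
  have hval : ∀ U : Matrix.unitaryGroup (Fin d) ℂ,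
      ((∑ i, ∑ j, traceNorm (blockOf (conjU U (scalarPlusRankOne c μ (meVec d))) i j)) - 1) / 2
        = (c * d ^ 2 + μ + (d - 1) * |μ| - 1) / 2 := by
    intro U
    set ψ := ((U : Matrix (Fin d) (Fin d) ℂ) ⊗ₖ (1 : Matrix (Fin d) (Fin d) ℂ))ᴴ *ᵥ meVec d
    -- the rows of `ψ` are the conjugated columns of `U` scaled by `1/√d`
    have hrow : ∀ k, star (fun l => ψ (k, l)) ⬝ᵥ (fun l => ψ (k, l)) = ((1 / d : ℝ) : ℂ) := by
      intro k
      rw [star_dotProduct_self_eq_sum_norm_sq]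
      simp [ψ, conjTranspose_kronecker_mulVec_meVec_apply, one_apply, mul_pow, ← Finset.mul_sum,
        sum_norm_sq_unitary_col, hd'.le]
    rw [conjU_scalarPlusRankOne, sum_traceNorm_blockOf_scalarPlusRankOne
      (by positivity) hrow hc (by rwa [mul_one_div])]
    field_simp
  simp only [QNA, hval, ciInf_const]

lemma le_l1Norm_conjUV_scalarPlusRankOne_meVec (hd : 0 < d) (c μ : ℝ)
    (U V : Matrix.unitaryGroup (Fin d) ℂ) :
    |c * d ^ 2 + μ| + (d - 1) * |μ| ≤ l1Norm (conjUV U V (scalarPlusRankOne c μ (meVec d))) := by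
  rw [conjUV_scalarPlusRankOne]
  set ψ := ((U : Matrix (Fin d) (Fin d) ℂ) ⊗ₖ (V : Matrix (Fin d) (Fin d) ℂ))ᴴ *ᵥ meVec d
  have hψ : ∑ p, ‖ψ p‖ ^ 2 = 1 :=
    (sum_norm_sq_conjTranspose_mulVec (kronecker_mem_unitary U.2 V.2).2 _).trans
      (sum_norm_sq_meVec hd)
  have hsum : √d ≤ ∑ p, ‖ψ p‖ := by
    simpa using one_div_le_sum_of_le Finset.univ (by positivity) (fun p _ => norm_nonneg _)
      (fun p _ => norm_conjTranspose_kronecker_mulVec_meVec_le U V p) hψ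
  have hsq : (d : ℝ) ≤ (∑ p, ‖ψ p‖) ^ 2 := by
    simpa using pow_le_pow_left₀ (Real.sqrt_nonneg _) hsum 2
  have hbound := le_l1Norm_scalarPlusRankOne c μ hψ
  simp only [Fintype.card_prod, Fintype.card_fin, ← sq, Nat.cast_pow] at hbound
  linarith [mul_le_mul_of_nonneg_left (sub_le_sub_right hsq 1) (abs_nonneg μ)]

lemma l1Norm_scalarPlusRankOne_meVec (hd : 0 < d) {c μ : ℝ} (hc : 0 ≤ c)
    (hcμ : 0 ≤ c + μ / d) :
    l1Norm (scalarPlusRankOne c μ (meVec d)) = c * d ^ 2 + μ + (d - 1) * |μ| := by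
  have hd' : (0 : ℝ) < d := by exact_mod_cast hd
  have hdiag : ∀ p, |c + μ * ‖meVec d p‖ ^ 2| = c + μ * ‖meVec d p‖ ^ 2 := fun p =>
    abs_of_nonneg <| by rw [norm_meVec]; split_ifs <;> simp [← div_eq_mul_inv, hcμ, hc]
  rw [l1Norm_scalarPlusRankOne, Finset.sum_congr rfl fun p _ => hdiag p, Finset.sum_add_distrib,
    ← Finset.mul_sum, sum_norm_sq_meVec hd, sum_norm_meVec, Real.sq_sqrt hd'.le]
  simp only [Finset.sum_const, Finset.card_univ, Fintype.card_prod, Fintype.card_fin, nsmul_eq_mul,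
    Nat.cast_mul]
  ring

lemma QNAB_scalarPlusRankOne_meVec (hd : 0 < d) {c μ : ℝ} (hc : 0 ≤ c) (hcμ : 0 ≤ c + μ / d) :
    QNAB (scalarPlusRankOne c μ (meVec d)) = (c * d ^ 2 + μ + (d - 1) * |μ| - 1) / 2 := by
  have hd' : (1 : ℝ) ≤ d := by exact_mod_cast hd
  have htr : 0 ≤ c * d ^ 2 + μ := by
    have : c * d ^ 2 + μ = c * d * (d - 1) + d * (c + μ / d) := by field_simp; ring
    rw [this]
    have : 0 ≤ (d : ℝ) - 1 := by linarith
    positivity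
  have hlow : ∀ U V : Matrix.unitaryGroup (Fin d) ℂ, (c * d ^ 2 + μ + (d - 1) * |μ| - 1) / 2
      ≤ (l1Norm (conjUV U V (scalarPlusRankOne c μ (meVec d))) - 1) / 2 := fun U V => by
    have := le_l1Norm_conjUV_scalarPlusRankOne_meVec hd c μ U V
    rw [abs_of_nonneg htr] at this
    linarith
  have hone : (l1Norm (conjUV 1 1 (scalarPlusRankOne c μ (meVec d))) - 1) / 2
      = (c * d ^ 2 + μ + (d - 1) * |μ| - 1) / 2 := by
    rw [conjUV_scalarPlusRankOne]
    simp [l1Norm_scalarPlusRankOne_meVec hd hc hcμ]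
  exact ciInf_eq_of_forall_ge_of_eq (fun U => le_ciInf (hlow U))
    (ciInf_eq_of_forall_ge_of_eq (hlow 1) hone)

end MaximallyEntangled

lemma isotropic_eq_scalarPlusRankOne (d : ℕ) (lam : ℝ) :
    isotropic d lam = scalarPlusRankOne ((1 - lam) / (d ^ 2 - 1))
      (lam - (1 - lam) / (d ^ 2 - 1)) (meVec d) := by
  rw [isotropic, scalarPlusRankOne, mePhi]
  match_scalars <;> ring

/-- the one-sided and two-sided negativity of quantumness of the isotropic
state both equal `|λd² − 1|/(2(d+1))`. -/
theorem stmt_15 (d : ℕ) (hd : 2 ≤ d) (lam : ℝ) (h0 : 0 ≤ lam) (h1 : lam ≤ 1) :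
    QNA (isotropic d lam) = |lam * (d : ℝ) ^ 2 - 1| / (2 * ((d : ℝ) + 1)) ∧
    QNAB (isotropic d lam) = |lam * (d : ℝ) ^ 2 - 1| / (2 * ((d : ℝ) + 1)) := by
  have hd' : (2 : ℝ) ≤ d := by exact_mod_cast hd
  have hden : 0 < (d : ℝ) ^ 2 - 1 := by nlinarith
  set c := (1 - lam) / ((d : ℝ) ^ 2 - 1) with hc_def
  have hc : 0 ≤ c := div_nonneg (by linarith) hden.le
  have hcμ : 0 ≤ c + (lam - c) / d := by
    rw [show c + (lam - c) / d = ((d - 1) * c + lam) / d by field_simp; ring]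
    have : (0 : ℝ) ≤ d - 1 := by linarith
    positivity
  have hval : (c * d ^ 2 + (lam - c) + (d - 1) * |lam - c| - 1) / 2
      = |lam * (d : ℝ) ^ 2 - 1| / (2 * ((d : ℝ) + 1)) := by
    have hμ : lam - c = (lam * d ^ 2 - 1) / (d ^ 2 - 1) := by rw [hc_def]; field_simp; ring
    have hsum : c * d ^ 2 + (lam - c) = 1 := by rw [hc_def]; field_simp; ring
    rw [hsum, hμ, abs_div, abs_of_pos hden]
    field_simp
    ring
  rw [isotropic_eq_scalarPlusRankOne, ← hval]
  exact ⟨QNA_scalarPlusRankOne_meVec (by omega) hc hcμ,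
    QNAB_scalarPlusRankOne_meVec (by omega) hc hcμ⟩
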